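/- Let σ be a convex polyhedral cone in a finite-dimensional real vector space N, let τ be a one-dimensional face of σ, and let α ∈ N* be a linear functional such that α is negative on τ∖{0} and nonnegative on every one-dimensional face τ′ ≠ τ of σ. If η is a face of σ with η ⊆ ker α, then τ + η is a face of σ. -/

import Mathlib

/-!
Background interface for the birational geometry of (complex) projective
varieties, used to state results of the paper
"Fano 4-folds with Picard number at least 7" (C. Casagrande).

Mathlib does not yet provide the notions of contraction, blow-up, canonical
class, Mori cones, etc.  These notions are therefore encoded as the data of an
abstract geometry `VarGeom K` over a base field `K`; compound notions
(Fano 4-folds, del Pezzo surfaces, elementary/small/divisorial contractions,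
rational contractions, types of fixed prime divisors, faces of the effective
cone, ...) are honestly *defined* in terms of these primitives, following the
definitions in the paper.
-/

open scoped Pointwise

noncomputable section

/-- The convex cone generated by a set of vectors. -/
def coneGen {V : Type} [AddCommGroup V] [Module ℝ V] (S : Set V) : Set V :=
  {x | ∃ (n : ℕ) (c : Fin n → ℝ) (v : Fin n → V),
    (∀ i, 0 ≤ c i) ∧ (∀ i, v i ∈ S) ∧ x = ∑ i, c i • v i}

/-- A subset of a real vector space is a convex cone (containing the origin). -/
def IsConvexConeSet {V : Type} [AddCommGroup V] [Module ℝ V] (C : Set V) : Prop :=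
  (0 : V) ∈ C ∧ (∀ x ∈ C, ∀ y ∈ C, x + y ∈ C) ∧ ∀ t : ℝ, 0 ≤ t → ∀ x ∈ C, t • x ∈ C

/-- `F` is a face of the convex cone `C`: a subcone such that whenever a sum of
two elements of `C` lies in `F`, both elements lie in `F`. -/
def IsFaceOf {V : Type} [AddCommGroup V] [Module ℝ V] (C F : Set V) : Prop :=
  IsConvexConeSet F ∧ F ⊆ C ∧ ∀ x ∈ C, ∀ y ∈ C, x + y ∈ F → x ∈ F ∧ y ∈ F

/-- A convex polyhedral cone: the cone generated by finitely many vectors. -/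
def IsPolyhedralCone {V : Type} [AddCommGroup V] [Module ℝ V] (σ : Set V) : Prop :=
  ∃ S : Finset V, σ = coneGen (S : Set V)

/-- The dimension of (the linear span of) a subset of a real vector space. -/
def coneDim {V : Type} [AddCommGroup V] [Module ℝ V] (F : Set V) : ℕ :=
  Module.finrank ℝ (Submodule.span ℝ F)

/-- Abstract interface for the geometry of algebraic varieties over the field `K`.
The fields are the primitive notions; everything else is defined from them. -/
structure VarGeom (K : Type) [Field K] : Type 1 where
  /-- the collection of varieties over `K` -/
  Var : Type
  /-- the points of a variety -/
  Pt : Var → Type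
  /-- the Zariski topology on the points -/
  top : ∀ X, TopologicalSpace (Pt X)
  /-- morphisms of varieties -/
  Hom : Var → Var → Type
  /-- the underlying function of a morphism -/
  homFun : ∀ {X Y}, Hom X Y → Pt X → Pt Y
  /-- composition of morphisms -/
  homComp : ∀ {X Y Z}, Hom Y Z → Hom X Y → Hom X Z
  /-- a morphism is an isomorphism -/
  IsIsoHom : ∀ {X Y}, Hom X Y → Prop
  /-- rational maps of varieties -/
  RatMap : Var → Var → Type
  /-- a morphism as a rational map -/
  homToRat : ∀ {X Y}, Hom X Y → RatMap X Y
  /-- composition of rational maps -/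
  ratComp : ∀ {X Y Z}, RatMap Y Z → RatMap X Y → RatMap X Z
  /-- the domain of definition of a rational map -/
  ratDomain : ∀ {X Y}, RatMap X Y → Set (Pt X)
  /-- strict transform of a closed subset under a birational map -/
  ratTransform : ∀ {X Y}, RatMap X Y → Set (Pt X) → Set (Pt Y)
  /-- strict (proper) transform of a closed subset of the target of a
  birational morphism -/
  strictTransform : ∀ {X Y}, Hom X Y → Set (Pt Y) → Set (Pt X)
  /-- dimension of a variety -/
  dim : Var → ℕ
  /-- the Picard number ρ -/
  picardNumber : Var → ℕ
  /-- dimension of a closed subset -/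
  setDim : ∀ {X}, Set (Pt X) → ℕ
  /-- the variety is smooth at a point -/
  IsSmoothPt : ∀ {X}, Pt X → Prop
  /-- a closed subvariety is smooth -/
  IsSmoothSub : ∀ {X}, Set (Pt X) → Prop
  IsProjective : Var → Prop
  IsQuasiProjective : Var → Prop
  IsNormal : Var → Prop
  IsQFactorial : Var → Prop
  /-- the anticanonical divisor −K is ample -/
  IsFano : Var → Prop
  /-- −K is nef and big -/
  IsWeakFano : Var → Prop
  IsMoriDreamSpace : Var → Prop
  IsLocallyFactorial : Var → Prop
  HasTerminalSingularities : Var → Prop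
  /-- the self-intersection K² of the canonical divisor of a surface -/
  Ksq : Var → ℤ
  /-- h⁰(X, −K_X) -/
  h0antiK : Var → ℕ
  /-- χ(X, O_X(−K_X)) -/
  chiAntiK : Var → ℤ
  /-- χ(S, O_Y(−K_Y)|_S) for a closed subvariety S ⊆ Y -/
  chiAntiKres : ∀ {Y}, Set (Pt Y) → ℤ
  /-- the product of two varieties -/
  prod : Var → Var → Var
  /-- isomorphism of varieties -/
  Isomorphic : Var → Var → Prop
  /-- projective space ℙⁿ -/
  Proj : ℕ → Var
  /-- a closed subvariety is normal -/
  IsNormalSub : ∀ {X}, Set (Pt X) → Prop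
  /-- the closed subvariety (with its reduced structure) is isomorphic to the
  given variety -/
  SubIsomorphicTo : ∀ {X}, Set (Pt X) → Var → Prop
  /-- `K_S = K_Y|_S` for a closed subvariety `S ⊆ Y` -/
  KEqualsRestriction : ∀ {Y}, Set (Pt Y) → Prop
  /-- a prime divisor `D` with `D = Bs|mD|` for all `m > 0` -/
  IsFixedPrimeDivisor : ∀ {X}, Set (Pt X) → Prop
  /-- a projective surjective morphism with connected fibers between normal
  varieties -/
  IsContraction : ∀ {X Y}, Hom X Y → Prop
  /-- −mK is Cartier and relatively ample for some m > 0 -/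
  IsKNegative : ∀ {X Y}, Hom X Y → Prop
  IsBirational : ∀ {X Y}, Hom X Y → Prop
  /-- the exceptional locus of a birational morphism -/
  exc : ∀ {X Y}, Hom X Y → Set (Pt X)
  /-- `f : X → Y` is the blow-up of `Y` along the given reduced closed
  subscheme -/
  IsBlowupAlong : ∀ {X Y}, Hom X Y → Set (Pt Y) → Prop
  /-- small ℚ-factorial modification: a birational map which is an isomorphism
  in codimension one (equivalently, for Mori dream spaces, a finite sequence
  of flips) -/
  IsSQM : ∀ {X Y}, RatMap X Y → Prop
  /-- a conic bundle -/
  IsConicBundle : ∀ {X Y}, Hom X Y → Prop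
  /-- a finite set of points in general position -/
  IsGeneralPoints : ∀ {X}, Set (Pt X) → Prop
  /-- the variety is (isomorphic to) a cubic hypersurface in ℙ⁵ -/
  IsCubicFourfoldInP5 : Var → Prop
  /-- the closed subset is a plane (a linear ℙ² of the ambient projective
  space) -/
  IsPlaneIn : ∀ {Z}, Set (Pt Z) → Prop
  /-- an ordinary double point: an isolated singularity locally analytically
  isomorphic to the vertex of the cone over a smooth quadric -/
  IsODP : ∀ {X}, Pt X → Prop
  /-- a cubic rational normal scroll (surface in ℙ⁴) -/
  IsCubicScrollIn : ∀ {X}, Set (Pt X) → Prop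
  /-- a cone over a twisted cubic (surface in ℙ⁴) -/
  IsConeOverTwistedCubicIn : ∀ {X}, Set (Pt X) → Prop
  /-- an irreducible 3-dimensional quadric Q with normal bundle O_Q(−1) -/
  IsQuadric3foldWithNormalOMinus1 : ∀ {X}, Set (Pt X) → Prop
  /-- an isolated, locally factorial, terminal singular point -/
  IsIsolatedLocallyFactorialTerminalPt : ∀ {X}, Pt X → Prop
  /-- two closed subvarieties intersect transversally at the given point -/
  IntersectTransversallyAt : ∀ {X}, Set (Pt X) → Set (Pt X) → Pt X → Prop
  /-- the general fiber of a contraction of fiber type, as an abstract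
  variety -/
  generalFiber : ∀ {X Y}, Hom X Y → Var
  /-- the Picard number of the generic fiber X_η over the field K(Y) -/
  genericFiberPicard : ∀ {X Y}, Hom X Y → ℕ
  /-- N(Z,X) := ι_*(N₁(Z)) ⊆ N₁(X), where N₁(X) is identified with ℝ^ρ -/
  NsubSpan : ∀ {X}, Set (Pt X) → Submodule ℝ (Fin (picardNumber X) → ℝ)
  /-- the numerical class of a divisor in N¹(X) ≅ ℝ^ρ -/
  divClass : ∀ {X}, Set (Pt X) → (Fin (picardNumber X) → ℝ)
  /-- the perfect pairing N¹(X) × N₁(X) → ℝ -/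
  pairing : ∀ X, (Fin (picardNumber X) → ℝ) →ₗ[ℝ] (Fin (picardNumber X) → ℝ) →ₗ[ℝ] ℝ
  /-- the cone of effective divisor classes in N¹(X) -/
  EffCone : ∀ X, Set (Fin (picardNumber X) → ℝ)
  /-- the cone of movable divisor classes in N¹(X) -/
  MovCone : ∀ X, Set (Fin (picardNumber X) → ℝ)
  /-- the Mori cone NE(X) ⊆ N₁(X) -/
  NECone : ∀ X, Set (Fin (picardNumber X) → ℝ)
  /-- pushforward f_* : N₁(X) → N₁(Y) -/
  pushN1 : ∀ {X Y}, Hom X Y → (Fin (picardNumber X) → ℝ) →ₗ[ℝ] (Fin (picardNumber Y) → ℝ)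
  /-- the locus of an extremal ray: the union of the curves with class in it -/
  raysLocus : ∀ {X}, Set (Fin (picardNumber X) → ℝ) → Set (Pt X)
  /-- the invariant d_f = ρ_X − dim τ_f of a rational contraction of fiber
  type, where τ_f is the minimal face of Eff(X) containing f^*(Eff Y) -/
  df : ∀ {X Y}, RatMap X Y → ℕ

namespace VarGeom

variable {K : Type} [Field K] (G : VarGeom K)

/-- N¹(X) ≅ N₁(X) ≅ ℝ^ρ. -/
abbrev Nvec (X : G.Var) : Type := Fin (G.picardNumber X) → ℝ

/-- A variety is irreducible. -/
def IsIrreducibleVar (X : G.Var) : Prop :=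
  letI := G.top X
  IsIrreducible (Set.univ : Set (G.Pt X))

/-- A variety is smooth. -/
def IsSmooth (X : G.Var) : Prop := ∀ p : G.Pt X, G.IsSmoothPt p

/-- The smooth locus of a variety. -/
def smoothLocus (X : G.Var) : Set (G.Pt X) := {p | G.IsSmoothPt p}

/-- A (smooth, complex) Fano 4-fold: a smooth projective 4-dimensional variety
with ample anticanonical divisor. -/
def IsFanoFourfold (X : G.Var) : Prop :=
  G.IsIrreducibleVar X ∧ G.IsSmooth X ∧ G.IsProjective X ∧ G.dim X = 4 ∧ G.IsFano X

/-- A del Pezzo surface: a smooth projective surface with ample anticanonical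
divisor. -/
def IsDelPezzoSurface (X : G.Var) : Prop :=
  G.IsIrreducibleVar X ∧ G.IsSmooth X ∧ G.IsProjective X ∧ G.dim X = 2 ∧ G.IsFano X

/-- X is isomorphic to a product of two (smooth projective) surfaces. -/
def IsProductOfTwoSurfaces (X : G.Var) : Prop :=
  ∃ S T : G.Var, G.IsSmooth S ∧ G.IsProjective S ∧ G.dim S = 2 ∧
    G.IsSmooth T ∧ G.IsProjective T ∧ G.dim T = 2 ∧ G.Isomorphic X (G.prod S T)

/-- A closed irreducible subvariety. -/
def IsSubvariety {X : G.Var} (S : Set (G.Pt X)) : Prop :=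
  letI := G.top X
  IsClosed S ∧ IsIrreducible S

/-- A prime divisor: a closed irreducible subvariety of codimension one. -/
def IsPrimeDivisorIn {X : G.Var} (D : Set (G.Pt X)) : Prop :=
  G.IsSubvariety D ∧ G.setDim D + 1 = G.dim X

/-- An elementary contraction: ρ_X − ρ_Y = 1. -/
def IsElementary {X Y : G.Var} (f : G.Hom X Y) : Prop :=
  G.IsContraction f ∧ G.picardNumber X = G.picardNumber Y + 1

/-- A morphism of fiber type: dim Y < dim X. -/
def IsOfFiberType {X Y : G.Var} (_f : G.Hom X Y) : Prop := G.dim Y < G.dim X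

/-- A small contraction: birational with exceptional locus of codim ≥ 2. -/
def IsSmallContraction {X Y : G.Var} (f : G.Hom X Y) : Prop :=
  G.IsContraction f ∧ G.IsBirational f ∧ G.setDim (G.exc f) + 2 ≤ G.dim X

/-- A divisorial contraction: birational with exceptional locus a prime
divisor. -/
def IsDivisorialContraction {X Y : G.Var} (f : G.Hom X Y) : Prop :=
  G.IsContraction f ∧ G.IsBirational f ∧ G.IsPrimeDivisorIn (G.exc f)

/-- X has no small elementary contraction. -/
def HasNoSmallElementaryContraction (X : G.Var) : Prop :=
  ∀ (Y : G.Var) (f : G.Hom X Y), ¬ (G.IsElementary f ∧ G.IsSmallContraction f)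

/-- A contraction of type (3,2): divisorial with dim Exc(f) = 3 and
dim f(Exc f) = 2. -/
def IsType32 {X Y : G.Var} (f : G.Hom X Y) : Prop :=
  G.IsDivisorialContraction f ∧ G.setDim (G.exc f) = 3 ∧
    G.setDim (G.homFun f '' G.exc f) = 2

/-- A rational contraction: a rational map factoring as an SQM followed by a
contraction. -/
def IsRationalContraction {X Y : G.Var} (f : G.RatMap X Y) : Prop :=
  ∃ (X' : G.Var) (φ : G.RatMap X X') (g : G.Hom X' Y),
    G.IsSQM φ ∧ G.IsContraction g ∧ f = G.ratComp (G.homToRat g) φ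

/-- An elementary rational contraction: ρ_X − ρ_Y = 1. -/
def IsElementaryRatContraction {X Y : G.Var} (f : G.RatMap X Y) : Prop :=
  G.IsRationalContraction f ∧ G.picardNumber X = G.picardNumber Y + 1

/-- A rational contraction of fiber type. -/
def IsRatContractionOfFiberType {X Y : G.Var} (f : G.RatMap X Y) : Prop :=
  G.IsRationalContraction f ∧ G.dim Y < G.dim X

/-- X has an elementary rational contraction onto a 3-fold. -/
def HasElemRatContractionOnto3fold (X : G.Var) : Prop :=
  ∃ (Y : G.Var) (f : G.RatMap X Y), G.dim Y = 3 ∧ G.IsElementaryRatContraction f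

/-- X has a rational contraction onto a 3-fold. -/
def HasRatContractionOnto3fold (X : G.Var) : Prop :=
  ∃ (Y : G.Var) (f : G.RatMap X Y), G.dim Y = 3 ∧ G.IsRationalContraction f

/-- A special contraction of fiber type: the target is ℚ-factorial and every
prime divisor of the source has image of codimension ≤ 1. -/
def IsSpecialContraction {X Y : G.Var} (f : G.Hom X Y) : Prop :=
  G.IsContraction f ∧ G.IsOfFiberType f ∧ G.IsQFactorial Y ∧
    ∀ D : Set (G.Pt X), G.IsPrimeDivisorIn D → G.dim Y ≤ G.setDim (G.homFun f '' D) + 1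

/-- A special rational contraction of fiber type (some resolution is special). -/
def IsSpecialRatContraction {X Y : G.Var} (f : G.RatMap X Y) : Prop :=
  ∃ (X' : G.Var) (φ : G.RatMap X X') (g : G.Hom X' Y),
    G.IsSQM φ ∧ G.IsSpecialContraction g ∧ f = G.ratComp (G.homToRat g) φ

/-- A quasi-elementary contraction of fiber type:
dim N(F,X) = ρ_X − ρ_Y for every fiber F. -/
def IsQuasiElementaryContraction {X Y : G.Var} (f : G.Hom X Y) : Prop :=
  G.IsContraction f ∧ G.IsOfFiberType f ∧
    ∀ y : G.Pt Y,
      Module.finrank ℝ (G.NsubSpan (G.homFun f ⁻¹' {y})) + G.picardNumber Y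
        = G.picardNumber X

/-- A quasi-elementary rational contraction (some resolution is
quasi-elementary). -/
def IsQuasiElemRatContraction {X Y : G.Var} (f : G.RatMap X Y) : Prop :=
  ∃ (X' : G.Var) (φ : G.RatMap X X') (g : G.Hom X' Y),
    G.IsSQM φ ∧ G.IsQuasiElementaryContraction g ∧ f = G.ratComp (G.homToRat g) φ

/-- A rational map is regular (a morphism). -/
def IsRegular {X Y : G.Var} (f : G.RatMap X Y) : Prop :=
  ∃ h : G.Hom X Y, f = G.homToRat h

/-- An equidimensional morphism: all fibers have dimension dim X − dim Y. -/
def IsEquidimensional {X Y : G.Var} (f : G.Hom X Y) : Prop :=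
  ∀ y : G.Pt Y, G.setDim (G.homFun f ⁻¹' {y}) + G.dim Y = G.dim X

/-- `F` is a general fiber of `f`: the fiber over a point of a nonempty open
subset of the target on which `y ↦ N(f⁻¹(y), X)` is constant. -/
def IsGeneralFiberSet {X Y : G.Var} (f : G.Hom X Y) (F : Set (G.Pt X)) : Prop :=
  letI := G.top Y
  ∃ U : Set (G.Pt Y), IsOpen U ∧ U.Nonempty ∧
    (∀ y ∈ U, ∀ y' ∈ U, G.NsubSpan (G.homFun f ⁻¹' {y}) = G.NsubSpan (G.homFun f ⁻¹' {y'})) ∧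
    ∃ y ∈ U, F = G.homFun f ⁻¹' {y}

/-- f is the blow-up of a smooth point. -/
def IsBlowupOfSmoothPoint {X Y : G.Var} (f : G.Hom X Y) : Prop :=
  ∃ p : G.Pt Y, G.IsSmoothPt p ∧ G.IsBlowupAlong f {p}

/-- f is the blow-up of a smooth irreducible curve contained in the smooth
locus of the target. -/
def IsBlowupOfSmoothCurve {X Y : G.Var} (f : G.Hom X Y) : Prop :=
  ∃ C : Set (G.Pt Y), G.IsSubvariety C ∧ G.IsSmoothSub C ∧ G.setDim C = 1 ∧
    C ⊆ G.smoothLocus Y ∧ G.IsBlowupAlong f C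

/-- f is of type (3,0)^Q: Exc(f) is an irreducible 3-dimensional quadric with
normal bundle O(−1), contracted to an isolated locally factorial terminal
point. -/
def IsType30Q {X Y : G.Var} (f : G.Hom X Y) : Prop :=
  G.IsQuadric3foldWithNormalOMinus1 (G.exc f) ∧
    ∃ p : G.Pt Y, G.homFun f '' G.exc f = {p} ∧
      G.IsIsolatedLocallyFactorialTerminalPt p

/-- f is of type (3,2)^sm: the blow-up of a smooth irreducible surface
contained in the smooth locus of the target. -/
def IsType32sm {X Y : G.Var} (f : G.Hom X Y) : Prop :=
  ∃ S : Set (G.Pt Y), G.IsSubvariety S ∧ G.IsSmoothSub S ∧ G.setDim S = 2 ∧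
    S ⊆ G.smoothLocus Y ∧ G.IsBlowupAlong f S

/-- A fixed prime divisor of type (3,0)^sm: there are an SQM ξ : X ⇢ X' and an
elementary divisorial contraction σ : X' → Y with exceptional divisor the
transform of D, with Y Fano and σ the blow-up of a smooth point. -/
def IsFixedPrimeDivisorOfType30sm {X : G.Var} (D : Set (G.Pt X)) : Prop :=
  G.IsFixedPrimeDivisor D ∧
  ∃ (X' Y : G.Var) (ξ : G.RatMap X X') (σ : G.Hom X' Y),
    G.IsSQM ξ ∧ G.IsElementary σ ∧ G.IsDivisorialContraction σ ∧
    G.exc σ = G.ratTransform ξ D ∧ G.IsFano Y ∧ G.IsBlowupOfSmoothPoint σ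

/-- A fixed prime divisor of type (3,1)^sm (σ is the blow-up of a smooth
irreducible curve in the smooth locus). -/
def IsFixedPrimeDivisorOfType31sm {X : G.Var} (D : Set (G.Pt X)) : Prop :=
  G.IsFixedPrimeDivisor D ∧
  ∃ (X' Y : G.Var) (ξ : G.RatMap X X') (σ : G.Hom X' Y),
    G.IsSQM ξ ∧ G.IsElementary σ ∧ G.IsDivisorialContraction σ ∧
    G.exc σ = G.ratTransform ξ D ∧ G.IsFano Y ∧ G.IsBlowupOfSmoothCurve σ

/-- A fixed prime divisor of type (3,0)^Q. -/
def IsFixedPrimeDivisorOfType30Q {X : G.Var} (D : Set (G.Pt X)) : Prop :=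
  G.IsFixedPrimeDivisor D ∧
  ∃ (X' Y : G.Var) (ξ : G.RatMap X X') (σ : G.Hom X' Y),
    G.IsSQM ξ ∧ G.IsElementary σ ∧ G.IsDivisorialContraction σ ∧
    G.exc σ = G.ratTransform ξ D ∧ G.IsFano Y ∧ G.IsType30Q σ

/-- A fixed prime divisor of type (3,2): here the elementary divisorial
contraction is defined on X itself, with dim σ(Exc σ) = 2. -/
def IsFixedPrimeDivisorOfType32 {X : G.Var} (D : Set (G.Pt X)) : Prop :=
  G.IsFixedPrimeDivisor D ∧
  ∃ (Y : G.Var) (σ : G.Hom X Y),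
    G.IsElementary σ ∧ G.IsType32 σ ∧ G.exc σ = D ∧ G.IsFano Y

/-- A movable face of Eff(X): a face meeting Mov(X) outside the origin. -/
def IsMovableFace (X : G.Var) (τ : Set (Fin (G.picardNumber X) → ℝ)) : Prop :=
  IsFaceOf (G.EffCone X) τ ∧ ∃ v ∈ τ ∩ G.MovCone X, v ≠ 0

/-- A fixed face of Eff(X): a face meeting Mov(X) only in the origin. -/
def IsFixedFace (X : G.Var) (τ : Set (Fin (G.picardNumber X) → ℝ)) : Prop :=
  IsFaceOf (G.EffCone X) τ ∧ τ ∩ G.MovCone X ⊆ {0}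

/-- Two fixed prime divisors are adjacent if the cone spanned by their classes
is a fixed face of Eff(X). -/
def AdjacentFixedDivisors {X : G.Var} (D E : Set (G.Pt X)) : Prop :=
  G.IsFixedFace X (coneGen {G.divClass D, G.divClass E})

/-- The relative Mori cone NE(f) = ker f_* ∩ NE(X). -/
def NEof {X Y : G.Var} (f : G.Hom X Y) : Set (Fin (G.picardNumber X) → ℝ) :=
  {v | v ∈ G.NECone X ∧ G.pushN1 f v = 0}

/-- An extremal ray of NE(X): a one-dimensional face. -/
def IsExtremalRay (X : G.Var) (R : Set (Fin (G.picardNumber X) → ℝ)) : Prop :=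
  IsFaceOf (G.NECone X) R ∧ coneDim R = 1

/-- `f : X → Z` is the composition of the blow-ups of the members of the list,
blowing up the first subvariety and successively the (strict) transforms of
the other ones. -/
inductive IsIteratedBlowupHom : {X Z : G.Var} → G.Hom X Z → List (Set (G.Pt Z)) → Prop
  | nil {X Z : G.Var} (f : G.Hom X Z) : G.IsIsoHom f → IsIteratedBlowupHom f []
  | cons {X Z Z' : G.Var} (f : G.Hom X Z) (A : Set (G.Pt Z)) (L : List (Set (G.Pt Z)))
      (g : G.Hom Z' Z) (h : G.Hom X Z') :
      G.IsBlowupAlong g A → f = G.homComp g h →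
      IsIteratedBlowupHom h (L.map (G.strictTransform g)) →
      IsIteratedBlowupHom f (A :: L)

/-- The conclusion of Theorem `brasile` (a): `f` factors through a 3-fold via a
special rational contraction followed by a contraction of fiber type. -/
def FactorsThrough3foldSpecial {X Y : G.Var} (f : G.RatMap X Y) : Prop :=
  ∃ (Z : G.Var) (g : G.RatMap X Z) (h : G.Hom Z Y),
    G.dim Z = 3 ∧ G.IsSpecialRatContraction g ∧ G.IsContraction h ∧
    G.IsOfFiberType h ∧ f = G.ratComp (G.homToRat h) g

/-- `f` is regular with general fiber a del Pezzo surface of degree one. -/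
def RegularWithDelPezzoDeg1Fiber {X Y : G.Var} (f : G.RatMap X Y) : Prop :=
  ∃ h : G.Hom X Y, f = G.homToRat h ∧
    G.IsDelPezzoSurface (G.generalFiber h) ∧ G.Ksq (G.generalFiber h) = 1

/-- Fano variety with at most isolated ordinary double points. -/
def IsFanoWithODPs (Z : G.Var) : Prop :=
  G.IsIrreducibleVar Z ∧ G.IsNormal Z ∧ G.IsProjective Z ∧ G.IsFano Z ∧
    ∀ p : G.Pt Z, ¬ G.IsSmoothPt p → G.IsODP p

/-- A closed subvariety which is a smooth del Pezzo surface. -/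
def IsSmoothDelPezzoSub {Y : G.Var} (S : Set (G.Pt Y)) : Prop :=
  G.IsSubvariety S ∧ G.IsSmoothSub S ∧ G.setDim S = 2 ∧
    ∃ T : G.Var, G.IsDelPezzoSurface T ∧ G.SubIsomorphicTo S T

/-- The orthogonal complement of a subspace of N₁(X) inside N¹(X), with respect
to the pairing. -/
def perp (X : G.Var) (M : Submodule ℝ (Fin (G.picardNumber X) → ℝ)) :
    Submodule ℝ (Fin (G.picardNumber X) → ℝ) where
  carrier := {φ | ∀ v ∈ M, G.pairing X φ v = 0}
  add_mem' := by
    intro a b ha hb v hv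
    have h1 := ha v hv
    have h2 := hb v hv
    rw [map_add]
    simp [LinearMap.add_apply, h1, h2]
  zero_mem' := by
    intro v hv
    simp
  smul_mem' := by
    intro c a ha v hv
    have h1 := ha v hv
    rw [map_smul]
    simp [LinearMap.smul_apply, h1]

end VarGeom

/-!
Write `σ = coneGen T` with `T` irredundant. Since `α` is negative on the face `τ`, `σ` contains no
line, so every generator spans an extremal ray of `σ`; hence each generator lies in `τ` or has
`α ≥ 0`, and every `x ∈ σ` splits as `p + q` with `p ∈ τ`, `q ∈ σ`, `α q ≥ 0`. If `x + y = t + e`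
with `t ∈ τ`, `e ∈ η`, the `σ`-parts satisfy `p + q = t + e`; as `τ` is a ray, `t - p` or `p - t`
lies in `τ`, and comparing values of `α` forces it to vanish. So `q = e ∈ η`, and `η` being a face
puts the `σ`-parts of `x` and `y` into `η`.
-/

section Cones

variable {V : Type} [AddCommGroup V]

def IsSalientSet (C : Set V) : Prop :=
  ∀ x ∈ C, -x ∈ C → x = 0

theorem IsSalientSet.eq_zero_of_add_eq_zero {C : Set V} (hC : IsSalientSet C) {x y : V}
    (hx : x ∈ C) (hy : y ∈ C) (hxy : x + y = 0) : x = 0 :=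
  hC x hx (by rwa [neg_eq_of_add_eq_zero_right hxy])

variable [Module ℝ V]

theorem IsConvexConeSet.sum_mem {C : Set V} (hC : IsConvexConeSet C) {ι : Type*}
    (s : Finset ι) {f : ι → V} (h : ∀ i ∈ s, f i ∈ C) : ∑ i ∈ s, f i ∈ C := by
  classical
  induction s using Finset.induction_on with
  | empty => simpa using hC.1
  | insert i s hi ih =>
    rw [Finset.sum_insert hi]
    exact hC.2.1 _ (h i (Finset.mem_insert_self i s)) _
      (ih fun j hj => h j (Finset.mem_insert_of_mem hj))

theorem IsConvexConeSet.add {C D : Set V} (hC : IsConvexConeSet C) (hD : IsConvexConeSet D) :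
    IsConvexConeSet (C + D) := by
  refine ⟨⟨0, hC.1, 0, hD.1, add_zero 0⟩, ?_, ?_⟩
  · rintro _ ⟨x, hx, y, hy, rfl⟩ _ ⟨x', hx', y', hy', rfl⟩
    exact ⟨x + x', hC.2.1 x hx x' hx', y + y', hD.2.1 y hy y' hy', add_add_add_comm x x' y y'⟩
  · rintro t ht _ ⟨x, hx, y, hy, rfl⟩
    exact ⟨t • x, hC.2.2 t ht x hx, t • y, hD.2.2 t ht y hy, (smul_add t x y).symm⟩

theorem isConvexConeSet_setOf_nonneg (α : V →ₗ[ℝ] ℝ) : IsConvexConeSet {x | 0 ≤ α x} := by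
  refine ⟨by simp, fun x hx y hy => ?_, fun t ht x hx => ?_⟩
  · simpa only [Set.mem_ofPred_eq, map_add] using add_nonneg hx hy
  · simpa only [Set.mem_ofPred_eq, map_smul, smul_eq_mul] using mul_nonneg ht hx

theorem subset_coneGen (S : Set V) : S ⊆ coneGen S :=
  fun x hx => ⟨1, fun _ => 1, fun _ => x, fun _ => zero_le_one, fun _ => hx, by simp⟩

theorem isConvexConeSet_coneGen (S : Set V) : IsConvexConeSet (coneGen S) := by
  refine ⟨⟨0, Fin.elim0, Fin.elim0, Fin.rec0, Fin.rec0, by simp⟩, ?_, ?_⟩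
  · rintro _ ⟨n, c, v, hc, hv, rfl⟩ _ ⟨m, d, w, hd, hw, rfl⟩
    refine ⟨n + m, Fin.append c d, Fin.append v w, Fin.addCases (by simpa using hc)
      (by simpa using hd), Fin.addCases (by simpa using hv) (by simpa using hw), ?_⟩
    simp [Fin.sum_univ_add]
  · rintro t ht _ ⟨n, c, v, hc, hv, rfl⟩
    exact ⟨n, fun i => t * c i, v, fun i => mul_nonneg ht (hc i), hv, by
      simp [Finset.smul_sum, smul_smul]⟩

theorem coneGen_mono {S T : Set V} (h : S ⊆ T) : coneGen S ⊆ coneGen T := by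
  rintro x ⟨n, c, v, hc, hv, rfl⟩
  exact ⟨n, c, v, hc, fun i => h (hv i), rfl⟩

theorem coneGen_subset {S C : Set V} (hC : IsConvexConeSet C) (h : S ⊆ C) :
    coneGen S ⊆ C := by
  rintro x ⟨n, c, v, hc, hv, rfl⟩
  exact hC.sum_mem _ fun i _ => hC.2.2 _ (hc i) _ (h (hv i))

theorem span_coneGen (S : Set V) : Submodule.span ℝ (coneGen S) = Submodule.span ℝ S := by
  refine le_antisymm (Submodule.span_le.mpr ?_) (Submodule.span_mono (subset_coneGen S))
  rintro x ⟨n, c, v, -, hv, rfl⟩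
  exact Submodule.sum_mem _ fun i _ => Submodule.smul_mem _ _ (Submodule.subset_span (hv i))

theorem mem_coneGen_singleton {a x : V} : x ∈ coneGen {a} ↔ ∃ r : ℝ, 0 ≤ r ∧ x = r • a := by
  constructor
  · rintro ⟨n, c, v, hc, hv, rfl⟩
    refine ⟨∑ i, c i, Finset.sum_nonneg fun i _ => hc i, ?_⟩
    simp only [Set.mem_singleton_iff] at hv
    simp [hv, Finset.sum_smul]
  · rintro ⟨r, hr, rfl⟩
    exact (isConvexConeSet_coneGen _).2.2 r hr a (subset_coneGen _ rfl)

theorem coneDim_coneGen_singleton {a : V} (ha : a ≠ 0) : coneDim (coneGen {a}) = 1 := by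
  rw [coneDim, span_coneGen, finrank_span_singleton ha]

theorem exists_add_of_mem_coneGen_union {A B : Set V} {x : V} (hx : x ∈ coneGen (A ∪ B)) :
    ∃ a ∈ coneGen A, ∃ b ∈ coneGen B, x = a + b := by
  classical
  obtain ⟨n, c, v, hc, hv, rfl⟩ := hx
  refine ⟨∑ i ∈ Finset.univ.filter (v · ∈ A), c i • v i, ?_,
    ∑ i ∈ Finset.univ.filter (v · ∉ A), c i • v i, ?_,
    (Finset.sum_filter_add_sum_filter_not _ _ _).symm⟩
  · refine (isConvexConeSet_coneGen A).sum_mem _ fun i hi => ?_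
    exact (isConvexConeSet_coneGen A).2.2 _ (hc i) _
      (subset_coneGen A (Finset.mem_filter.mp hi).2)
  · refine (isConvexConeSet_coneGen B).sum_mem _ fun i hi => ?_
    exact (isConvexConeSet_coneGen B).2.2 _ (hc i) _
      (subset_coneGen B ((hv i).resolve_left (Finset.mem_filter.mp hi).2))

theorem exists_irredundant_coneGen_eq [DecidableEq V] (S : Finset V) :
    ∃ T : Finset V, coneGen (T : Set V) = coneGen (S : Set V) ∧
      ∀ a ∈ T, a ∉ coneGen (T.erase a : Set V) := by
  induction S using Finset.strongInduction with
  | _ S ih =>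
    by_cases h : ∃ a ∈ S, a ∈ coneGen (S.erase a : Set V)
    · obtain ⟨a, haS, ha⟩ := h
      obtain ⟨T, hT, hirr⟩ := ih (S.erase a) (Finset.erase_ssubset haS)
      refine ⟨T, hT.trans (Set.Subset.antisymm (coneGen_mono (by simp)) ?_), hirr⟩
      refine coneGen_subset (isConvexConeSet_coneGen _) fun b hb => ?_
      by_cases hba : b = a
      · exact hba ▸ ha
      · exact subset_coneGen _ (by simp [hba, hb])
    · push Not at h
      exact ⟨S, rfl, h⟩

theorem exists_smul_add_of_mem_coneGen [DecidableEq V] {T : Finset V} {a x : V} (haT : a ∈ T)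
    (hx : x ∈ coneGen (T : Set V)) :
    ∃ r : ℝ, 0 ≤ r ∧ ∃ z ∈ coneGen (T.erase a : Set V), x = r • a + z := by
  rw [← Finset.insert_erase haT, Finset.coe_insert, Set.insert_eq] at hx
  obtain ⟨_, hra, z, hz, rfl⟩ := exists_add_of_mem_coneGen_union hx
  obtain ⟨r, hr, rfl⟩ := mem_coneGen_singleton.mp hra
  exact ⟨r, hr, z, hz, rfl⟩

theorem isFaceOf_coneGen_singleton [DecidableEq V] {T : Finset V}
    (hsal : IsSalientSet (coneGen (T : Set V))) {a : V} (haT : a ∈ T)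
    (hirr : a ∉ coneGen (T.erase a : Set V)) : IsFaceOf (coneGen (T : Set V)) (coneGen {a}) := by
  have hcone := isConvexConeSet_coneGen (T : Set V)
  have hrest : coneGen (T.erase a : Set V) ⊆ coneGen T := coneGen_mono (by simp)
  refine ⟨isConvexConeSet_coneGen _, coneGen_mono (by simpa using haT), ?_⟩
  intro x hx y hy hxy
  obtain ⟨r, hr, z, hz, rfl⟩ := exists_smul_add_of_mem_coneGen haT hx
  obtain ⟨s, hs, w, hw, rfl⟩ := exists_smul_add_of_mem_coneGen haT hy
  obtain ⟨l, -, hl⟩ := mem_coneGen_singleton.mp hxy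
  have hzw : z + w = (l - (r + s)) • a := by rw [sub_smul, ← hl]; module
  have hzw_mem := (isConvexConeSet_coneGen _).2.1 z hz w hw
  have hle : l - (r + s) ≤ 0 := by
    by_contra! hpos
    refine hirr ?_
    have := (isConvexConeSet_coneGen _).2.2 _ (inv_nonneg.mpr hpos.le) _ hzw_mem
    rwa [hzw, smul_smul, inv_mul_cancel₀ hpos.ne', one_smul] at this
  have hzw0 : z + w = 0 := by
    refine hsal.eq_zero_of_add_eq_zero (hrest hzw_mem) (y := (r + s - l) • a)
      (hcone.2.2 _ (by linarith) a (subset_coneGen _ (by simpa using haT))) ?_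
    rw [hzw, ← add_smul]; simp
  have hz0 : z = 0 := hsal.eq_zero_of_add_eq_zero (hrest hz) (hrest hw) hzw0
  have hw0 : w = 0 := by rwa [hz0, zero_add] at hzw0
  rw [hz0, hw0, add_zero, add_zero]
  exact ⟨mem_coneGen_singleton.mpr ⟨r, hr, rfl⟩, mem_coneGen_singleton.mpr ⟨s, hs, rfl⟩⟩

theorem IsPolyhedralCone.exists_extremal_rays {σ : Set V} (hσ : IsPolyhedralCone σ)
    (hsal : IsSalientSet σ) : ∃ T : Finset V, σ = coneGen (T : Set V) ∧
      ∀ a ∈ T, IsFaceOf σ (coneGen {a}) ∧ coneDim (coneGen {a}) = 1 := by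
  classical
  obtain ⟨S, rfl⟩ := hσ
  obtain ⟨T, hTS, hirr⟩ := exists_irredundant_coneGen_eq S
  rw [← hTS] at hsal ⊢
  refine ⟨T, rfl, fun a ha => ⟨isFaceOf_coneGen_singleton hsal ha (hirr a ha),
    coneDim_coneGen_singleton ?_⟩⟩
  rintro rfl
  exact hirr 0 ha (isConvexConeSet_coneGen _).1

theorem IsFaceOf.isSalientSet {σ τ : Set V} (hτ : IsFaceOf σ τ) {α : V →ₗ[ℝ] ℝ}
    (hneg : ∀ x ∈ τ, x ≠ 0 → α x < 0) : IsSalientSet σ := by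
  intro x hx hnx
  obtain ⟨hxτ, hnxτ⟩ := hτ.2.2 x hx (-x) hnx (by simpa using hτ.1.1)
  by_contra hx0
  have h := hneg (-x) hnxτ (neg_ne_zero.mpr hx0)
  rw [map_neg] at h
  linarith [hneg x hxτ hx0]

theorem IsConvexConeSet.sub_mem_or_sub_mem {τ : Set V} (hτ : IsConvexConeSet τ)
    (hdim : coneDim τ = 1) {t p : V} (ht : t ∈ τ) (hp : p ∈ τ) : t - p ∈ τ ∨ p - t ∈ τ := by
  obtain ⟨u, hu, hu0⟩ : ∃ u ∈ τ, u ≠ 0 := by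
    by_contra! h
    rw [coneDim, Submodule.span_eq_bot.mpr h, finrank_bot] at hdim
    exact zero_ne_one hdim
  have hline := (finrank_eq_one_iff_of_nonzero' (⟨u, Submodule.subset_span hu⟩ :
    Submodule.span ℝ τ) (by simpa using hu0)).mp hdim
  obtain ⟨c, hc⟩ := hline ⟨t, Submodule.subset_span ht⟩
  obtain ⟨d, hd⟩ := hline ⟨p, Submodule.subset_span hp⟩
  rw [Subtype.ext_iff] at hc hd
  simp only [SetLike.val_smul] at hc hd
  rw [← hc, ← hd, ← sub_smul, ← sub_smul]
  rcases le_total d c with h | h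
  · exact .inl (hτ.2.2 _ (sub_nonneg.mpr h) u hu)
  · exact .inr (hτ.2.2 _ (sub_nonneg.mpr h) u hu)

theorem exists_add_of_mem_coneGen {S τ : Set V} (hτ : IsConvexConeSet τ) {α : V →ₗ[ℝ] ℝ}
    (hS : ∀ a ∈ S, a ∈ τ ∨ 0 ≤ α a) {x : V} (hx : x ∈ coneGen S) :
    ∃ p ∈ τ, ∃ q ∈ coneGen S, 0 ≤ α q ∧ x = p + q := by
  rw [← Set.inter_union_sdiff S τ] at hx
  obtain ⟨p, hp, q, hq, rfl⟩ := exists_add_of_mem_coneGen_union hx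
  refine ⟨p, coneGen_subset hτ Set.inter_subset_right hp, q, coneGen_mono Set.sdiff_subset hq, ?_,
    rfl⟩
  exact coneGen_subset (isConvexConeSet_setOf_nonneg α)
    (fun a ha => (hS a ha.1).resolve_left ha.2) hq

section Face

variable {σ τ η : Set V} {α : V →ₗ[ℝ] ℝ}

theorem eq_of_add_eq_add_of_isFaceOf (hτ : IsFaceOf σ τ) (hτdim : coneDim τ = 1)
    (hneg : ∀ x ∈ τ, x ≠ 0 → α x < 0) (hη : IsFaceOf σ η) (hker : ∀ x ∈ η, α x = 0)
    {p t q e : V} (hp : p ∈ τ) (ht : t ∈ τ) (hq : q ∈ σ) (hqα : 0 ≤ α q) (he : e ∈ η)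
    (hsum : p + q = t + e) : q = e := by
  rcases hτ.1.sub_mem_or_sub_mem hτdim ht hp with hd | hd
  · have hqe : q = (t - p) + e := by rw [← add_sub_cancel_left p q, hsum]; abel
    by_contra hne
    have hd0 : t - p ≠ 0 := fun h => hne (by rw [hqe, h, zero_add])
    have := hneg _ hd hd0
    rw [hqe, map_add, hker e he] at hqα
    linarith
  · have hed : e = (p - t) + q := by rw [← add_sub_cancel_left t e, ← hsum]; abel
    have hdη := (hη.2.2 _ (hτ.2.1 hd) q hq (hed ▸ he)).1
    have hd0 : p - t = 0 := by
      by_contra h0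
      linarith [hneg _ hd h0, hker _ hdη]
    rw [hed, hd0, zero_add]

theorem IsFaceOf.add_of_forall_exists_add (hσ : IsConvexConeSet σ) (hτ : IsFaceOf σ τ)
    (hτdim : coneDim τ = 1) (hneg : ∀ x ∈ τ, x ≠ 0 → α x < 0) (hη : IsFaceOf σ η)
    (hker : ∀ x ∈ η, α x = 0) (hsplit : ∀ x ∈ σ, ∃ p ∈ τ, ∃ q ∈ σ, 0 ≤ α q ∧ x = p + q) :
    IsFaceOf σ (τ + η) := by
  refine ⟨hτ.1.add hη.1, ?_, ?_⟩
  · rintro _ ⟨t, ht, e, he, rfl⟩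
    exact hσ.2.1 t (hτ.2.1 ht) e (hη.2.1 he)
  rintro x hx y hy ⟨t, ht, e, he, hte⟩
  obtain ⟨xp, hxp, xq, hxq, hxqα, rfl⟩ := hsplit x hx
  obtain ⟨yp, hyp, yq, hyq, hyqα, rfl⟩ := hsplit y hy
  have hqe : xq + yq = e :=
    eq_of_add_eq_add_of_isFaceOf hτ hτdim hneg hη hker (hτ.1.2.1 xp hxp yp hyp) ht
      (hσ.2.1 xq hxq yq hyq) (by rw [map_add]; positivity) he (by simp only at hte; rw [hte]; abel)
  obtain ⟨hxqη, hyqη⟩ := hη.2.2 xq hxq yq hyq (hqe ▸ he)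
  exact ⟨⟨xp, hxp, xq, hxqη, rfl⟩, ⟨yp, hyp, yq, hyqη, rfl⟩⟩

end Face

end Cones

theorem stmt_15_general {N : Type} [AddCommGroup N] [Module ℝ N]
    (σ τ η : Set N) (hσ : IsPolyhedralCone σ)
    (hτ : IsFaceOf σ τ) (hτdim : coneDim τ = 1)
    (α : N →ₗ[ℝ] ℝ)
    (hneg : ∀ x ∈ τ, x ≠ 0 → α x < 0)
    (hnonneg : ∀ τ' : Set N, IsFaceOf σ τ' → coneDim τ' = 1 → τ' ≠ τ →
      ∀ x ∈ τ', 0 ≤ α x)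
    (hη : IsFaceOf σ η) (hker : ∀ x ∈ η, α x = 0) :
    IsFaceOf σ (τ + η) := by
  obtain ⟨T, rfl, hrays⟩ := hσ.exists_extremal_rays (hτ.isSalientSet hneg)
  have hgen : ∀ a ∈ (T : Set N), a ∈ τ ∨ 0 ≤ α a := by
    intro a ha
    obtain ⟨hface, hdim⟩ := hrays a ha
    by_cases hray : coneGen {a} = τ
    · exact .inl (hray ▸ subset_coneGen _ rfl)
    · exact .inr (hnonneg _ hface hdim hray a (subset_coneGen _ rfl))
  exact hτ.add_of_forall_exists_add (isConvexConeSet_coneGen _) hτdim hneg hη hker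
    fun x hx => exists_add_of_mem_coneGen hτ.1 hgen hx

/-- Let σ be a convex polyhedral cone in a finite-dimensional
real vector space N, τ a one-dimensional face of σ, and α ∈ N* a linear
functional negative on τ∖{0} and nonnegative on every one-dimensional face
τ' ≠ τ of σ. If η is a face of σ with η ⊆ ker α, then τ + η is a face of σ. -/
theorem stmt_15 {N : Type} [AddCommGroup N] [Module ℝ N]
    [FiniteDimensional ℝ N]
    (σ τ η : Set N) (hσ : IsPolyhedralCone σ)
    (hτ : IsFaceOf σ τ) (hτdim : coneDim τ = 1)
    (α : N →ₗ[ℝ] ℝ)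
    (hneg : ∀ x ∈ τ, x ≠ 0 → α x < 0)
    (hnonneg : ∀ τ' : Set N, IsFaceOf σ τ' → coneDim τ' = 1 → τ' ≠ τ →
      ∀ x ∈ τ', 0 ≤ α x)
    (hη : IsFaceOf σ η) (hker : ∀ x ∈ η, α x = 0) :
    IsFaceOf σ (τ + η) :=
  stmt_15_general σ τ η hσ hτ hτdim α hneg hnonneg hη hker
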